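/- Let m1 and m2 be odd positive integers. If there exist a PDM(3, m1), a PDM(3, 2m1−1), and an SIPDM(3, m2, 1), then there exists a PDM(3, m) with m = m1(m2+1) − 1. Moreover, if in addition there exists an SIPDM(3, 2m1−1, 1), then there exists an SIPDM(3, m, 1). -/

import Mathlib

/-- For odd `m = 2r+1`, the set `I_m = {-r, …, r}`. -/
noncomputable def Iset (m : ℕ) : Finset ℤ := Finset.Icc (-(((m : ℤ) - 1) / 2)) (((m : ℤ) - 1) / 2)

/-- `f` comprises all elements of `S` exactly once (entries from `S`,
each element of `S` appearing exactly once). -/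
def rowPerfect {ι : Type*} (S : Finset ℤ) (f : ι → ℤ) : Prop :=
  (∀ j, f j ∈ S) ∧ ∀ z ∈ S, ∃! j, f j = z

/-- `D` is a perfect difference matrix based on the set `S`: every row
comprises all elements of `S` exactly once, and the componentwise differences
of any two distinct rows comprise all elements of `S` exactly once. -/
def IsPDMOn {n : ℕ} {ι : Type*} (S : Finset ℤ) (D : Fin n → ι → ℤ) : Prop :=
  (∀ i, rowPerfect S (D i)) ∧
  ∀ s t : Fin n, s < t → rowPerfect S (fun j => D t j - D s j)

/-- There exists a `PDM(n,m)`. -/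
def PDMexists (n m : ℕ) : Prop := ∃ D : Fin n → Fin m → ℤ, IsPDMOn (Iset m) D

/-- There exists an `SIPDM(n,m,1)` (standard incomplete PDM with hole `{0}`). -/
def SIPDMexists (n m : ℕ) : Prop :=
  ∃ D : Fin n → Fin (m - 1) → ℤ, IsPDMOn (Iset m \ {0}) D

/-- Directed list of differences of a block, as a multiset. -/
def deltaB (B : Finset ℤ) : Multiset ℤ :=
  ((B ×ˢ B).filter (fun p => p.2 < p.1)).val.map (fun p => p.1 - p.2)

/-- Directed list of differences of a family of blocks. -/
def deltaFam {t : ℕ} (B : Fin t → Finset ℤ) : Multiset ℤ :=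
  (Finset.univ.val : Multiset (Fin t)).bind (fun i => deltaB (B i))

/-- A `(v,4,1)`-PDP with `t` blocks covering `H ⊆ [1,(v-1)/2]`: the directed
differences of the blocks cover each element of `H` exactly once and nothing else. -/
def IsPDP4 (v t : ℕ) (B : Fin t → Finset ℤ) (H : Finset ℤ) : Prop :=
  (∀ i, (B i).card = 4) ∧ H ⊆ Finset.Icc 1 (((v : ℤ) - 1) / 2) ∧ deltaFam B = H.val

/-! Write `m₁ = 2a+1`, `m₂ = 2b+1`, `δ = b+1`. Every integer `z` with `|z| ≤ 2δa + b` is either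
`δx` with `|x| ≤ 2a`, or `2δx + y` with `|x| ≤ a` and `0 < |y| ≤ b`, and in exactly one way:
divisibility by `δ` separates the two forms, `y` is recovered modulo `2δ`, and counting shows
that no integer of the interval is missed.
So scaling a `PDM(3, 2m₁-1)` by `δ` and adjoining the columns `2δ·u + v`, for `u` a column of a
`PDM(3, m₁)` and `v` a column of an `SIPDM(3, m₂, 1)`, gives a `PDM(3, m₁(m₂+1)-1)`, because
both operations commute with taking differences of rows. Deleting `0` everywhere gives the
incomplete version. -/

open Finset

section RowPerfect

variable {ι κ : Type*} {S T : Finset ℤ} {f : ι → ℤ} {g : κ → ℤ}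

lemma rowPerfect.comp_equiv (h : rowPerfect S f) (e : κ ≃ ι) : rowPerfect S (f ∘ e) := by
  refine ⟨fun j => h.1 (e j), fun z hz => ?_⟩
  obtain ⟨j, rfl, hju⟩ := h.2 z hz
  exact ⟨e.symm j, by simp, fun y hy => e.eq_symm_apply.mpr (hju (e y) hy)⟩

lemma rowPerfect.image (h : rowPerfect S f) {φ : ℤ → ℤ} (hφ : Set.InjOn φ S) :
    rowPerfect (S.image φ) (φ ∘ f) := by
  refine ⟨fun j => mem_image_of_mem φ (h.1 j), ?_⟩
  intro z hz
  obtain ⟨x, hx, rfl⟩ := mem_image.mp hz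
  obtain ⟨j, rfl, hju⟩ := h.2 x hx
  exact ⟨j, rfl, fun j' hj' => hju j' (hφ (h.1 j') hx hj')⟩

lemma rowPerfect.image_product (hf : rowPerfect S f) (hg : rowPerfect T g) {φ : ℤ × ℤ → ℤ}
    (hφ : Set.InjOn φ ↑(S ×ˢ T)) :
    rowPerfect ((S ×ˢ T).image φ) (fun p : ι × κ => φ (f p.1, g p.2)) := by
  refine ⟨fun p => mem_image_of_mem φ (mem_product.mpr ⟨hf.1 p.1, hg.1 p.2⟩), ?_⟩
  intro z hz
  obtain ⟨⟨x, y⟩, hxy, rfl⟩ := mem_image.mp hz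
  obtain ⟨hx, hy⟩ := mem_product.mp hxy
  obtain ⟨j, rfl, hju⟩ := hf.2 x hx
  obtain ⟨k, rfl, hku⟩ := hg.2 y hy
  refine ⟨(j, k), rfl, fun ⟨j', k'⟩ h => ?_⟩
  have := hφ (mem_coe.mpr (mem_product.mpr ⟨hf.1 j', hg.1 k'⟩)) (mem_coe.mpr hxy) h
  simp only [Prod.mk.injEq] at this
  rw [hju j' this.1, hku k' this.2]

lemma rowPerfect.sumElim (hf : rowPerfect S f) (hg : rowPerfect T g) (hST : Disjoint S T) :
    rowPerfect (S ∪ T) (Sum.elim f g) := by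
  refine ⟨fun | .inl j => mem_union_left _ (hf.1 j) | .inr k => mem_union_right _ (hg.1 k),
    fun z hz => ?_⟩
  rcases mem_union.mp hz with hz | hz
  · obtain ⟨j, rfl, hju⟩ := hf.2 z hz
    refine ⟨Sum.inl j, rfl, ?_⟩
    rintro (j' | k') h
    · exact congrArg _ (hju j' h)
    · exact absurd (h ▸ hg.1 k') (disjoint_left.mp hST hz)
  · obtain ⟨k, rfl, hku⟩ := hg.2 z hz
    refine ⟨Sum.inr k, rfl, ?_⟩
    rintro (j' | k') h
    · exact absurd (h ▸ hf.1 j') (disjoint_right.mp hST hz)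
    · exact congrArg _ (hku k' h)

end RowPerfect

section Composition

variable {n : ℕ} {ι₀ ι₁ ι₂ : Type*} {S₀ S₁ S₂ : Finset ℤ}

lemma IsPDMOn.comp_equiv {ι κ : Type*} {S : Finset ℤ} {D : Fin n → ι → ℤ} (h : IsPDMOn S D)
    (e : κ ≃ ι) : IsPDMOn S (fun i => D i ∘ e) :=
  ⟨fun i => (h.1 i).comp_equiv e, fun s t hst => (h.2 s t hst).comp_equiv e⟩

lemma IsPDMOn.exists_fin {ι : Type*} [Fintype ι] {S : Finset ℤ} {D : Fin n → ι → ℤ}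
    (h : IsPDMOn S D) {N : ℕ} (hN : Fintype.card ι = N) :
    ∃ D' : Fin n → Fin N → ℤ, IsPDMOn S D' :=
  ⟨_, h.comp_equiv (Fintype.equivFinOfCardEq hN).symm⟩

lemma rowPerfect_sumElim_mul_add {c d : ℤ} (hc : c ≠ 0)
    (hinj : Set.InjOn (fun p : ℤ × ℤ => d * p.1 + p.2) ↑(S₁ ×ˢ S₂))
    (hdisj : Disjoint (S₀.image (c * ·)) ((S₁ ×ˢ S₂).image fun p => d * p.1 + p.2))
    {f : ι₀ → ℤ} {g : ι₁ → ℤ} {h : ι₂ → ℤ}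
    (hf : rowPerfect S₀ f) (hg : rowPerfect S₁ g) (hh : rowPerfect S₂ h) :
    rowPerfect (S₀.image (c * ·) ∪ (S₁ ×ˢ S₂).image fun p => d * p.1 + p.2)
      (Sum.elim (fun l => c * f l) (fun p : ι₁ × ι₂ => d * g p.1 + h p.2)) :=
  (hf.image (mul_right_injective₀ hc).injOn).sumElim (hg.image_product hh hinj) hdisj

theorem IsPDMOn.sumElim_mul_add {F : Fin n → ι₀ → ℤ} {A : Fin n → ι₁ → ℤ}
    {C : Fin n → ι₂ → ℤ} (hF : IsPDMOn S₀ F) (hA : IsPDMOn S₁ A) (hC : IsPDMOn S₂ C)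
    {c d : ℤ} (hc : c ≠ 0)
    (hinj : Set.InjOn (fun p : ℤ × ℤ => d * p.1 + p.2) ↑(S₁ ×ˢ S₂))
    (hdisj : Disjoint (S₀.image (c * ·)) ((S₁ ×ˢ S₂).image fun p => d * p.1 + p.2)) :
    IsPDMOn (S₀.image (c * ·) ∪ (S₁ ×ˢ S₂).image fun p => d * p.1 + p.2)
      (fun i => Sum.elim (fun l => c * F i l) (fun p : ι₁ × ι₂ => d * A i p.1 + C i p.2)) := by
  refine ⟨fun i => rowPerfect_sumElim_mul_add hc hinj hdisj (hF.1 i) (hA.1 i) (hC.1 i),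
    fun s t hst => ?_⟩
  convert rowPerfect_sumElim_mul_add hc hinj hdisj (hF.2 s t hst) (hA.2 s t hst) (hC.2 s t hst)
    using 1
  funext j
  rcases j with l | p <;> simp only [Sum.elim_inl, Sum.elim_inr] <;> ring

end Composition

lemma Iset_two_mul_add_one (r : ℕ) : Iset (2 * r + 1) = Icc (-(r : ℤ)) r := by
  simp only [Iset]
  congr <;> push_cast <;> omega

lemma mem_Iset_two_mul_add_one {r : ℕ} {z : ℤ} : z ∈ Iset (2 * r + 1) ↔ |z| ≤ r := by
  rw [Iset_two_mul_add_one, mem_Icc, abs_le]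

lemma card_Iset_two_mul_add_one (r : ℕ) : #(Iset (2 * r + 1)) = 2 * r + 1 := by
  rw [Iset_two_mul_add_one, Int.card_Icc]
  omega

lemma card_Iset_two_mul_add_one_sdiff_zero (r : ℕ) : #(Iset (2 * r + 1) \ {0}) = 2 * r := by
  rw [sdiff_singleton_eq_erase, card_erase_of_mem (mem_Iset_two_mul_add_one.mpr (by simp)),
    card_Iset_two_mul_add_one, Nat.add_sub_cancel]

lemma injOn_mul_add {d : ℤ} {T : Finset ℤ} (hT : ∀ y ∈ T, 2 * |y| < d) (S : Finset ℤ) :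
    Set.InjOn (fun p : ℤ × ℤ => d * p.1 + p.2) ↑(S ×ˢ T) := by
  rintro ⟨x, y⟩ hxy ⟨x', y'⟩ hxy' h
  simp only [coe_product, Set.mem_prod, mem_coe] at hxy hxy' h
  have hdvd : d ∣ y' - y := ⟨x - x', by linarith⟩
  have hsmall : |y' - y| < d := by
    have := abs_sub y' y
    linarith [hT y hxy.2, hT y' hxy'.2]
  have hy : y' = y := by linarith [Int.eq_zero_of_abs_lt_dvd hdvd hsmall]
  subst hy
  have hd : d ≠ 0 := by linarith [abs_nonneg y', hT y' hxy'.2]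
  simp [mul_left_cancel₀ hd (by linarith : d * x = d * x')]

lemma disjoint_image_mul_image_mul_add {c : ℤ} {T : Finset ℤ} (hT : ∀ y ∈ T, y ≠ 0 ∧ |y| < c)
    (S₀ S₁ : Finset ℤ) :
    Disjoint (S₀.image (c * ·)) ((S₁ ×ˢ T).image fun p => 2 * c * p.1 + p.2) := by
  refine disjoint_left.mpr fun z hz hz' => ?_
  obtain ⟨x, -, rfl⟩ := mem_image.mp hz
  obtain ⟨⟨x', y⟩, hxy, h⟩ := mem_image.mp hz'
  have hy := hT y (mem_product.mp hxy).2
  exact hy.1 (Int.eq_zero_of_abs_lt_dvd ⟨x - 2 * x', by linarith⟩ hy.2)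

lemma zero_mem_Iset {m : ℕ} (hm : 0 < m) : 0 ∈ Iset m := by
  simp only [Iset, mem_Icc]
  omega

lemma mem_Iset_sdiff_zero {r : ℕ} {y : ℤ} (hy : y ∈ Iset (2 * r + 1) \ {0}) :
    y ≠ 0 ∧ |y| < r + 1 := by
  rw [mem_sdiff, mem_Iset_two_mul_add_one, mem_singleton] at hy
  exact ⟨hy.2, by linarith⟩

lemma injOn_mul_add_Iset_sdiff_zero (b : ℕ) (S : Finset ℤ) :
    Set.InjOn (fun p : ℤ × ℤ => 2 * ((b : ℤ) + 1) * p.1 + p.2) ↑(S ×ˢ (Iset (2 * b + 1) \ {0})) :=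
  injOn_mul_add (fun _ hy => by linarith [(mem_Iset_sdiff_zero hy).2]) S

lemma disjoint_image_mul_image_mul_add_Iset_sdiff_zero (b : ℕ) (S₀ S₁ : Finset ℤ) :
    Disjoint (S₀.image (((b : ℤ) + 1) * ·))
      ((S₁ ×ˢ (Iset (2 * b + 1) \ {0})).image fun p => 2 * ((b : ℤ) + 1) * p.1 + p.2) :=
  disjoint_image_mul_image_mul_add (fun _ hy => mem_Iset_sdiff_zero hy) S₀ S₁

lemma Iset_eq_union_image (a b : ℕ) :
    Iset ((2 * a + 1) * (2 * b + 1 + 1) - 1) =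
      (Iset (2 * (2 * a + 1) - 1)).image (((b : ℤ) + 1) * ·) ∪
        (Iset (2 * a + 1) ×ˢ (Iset (2 * b + 1) \ {0})).image
          fun p => 2 * ((b : ℤ) + 1) * p.1 + p.2 := by
  rw [show 2 * (2 * a + 1) - 1 = 2 * (2 * a) + 1 by omega,
    show (2 * a + 1) * (2 * b + 1 + 1) - 1 = 2 * (2 * (b + 1) * a + b) + 1 by
      rw [Nat.sub_eq_of_eq_add]; ring]
  have hdisj := disjoint_image_mul_image_mul_add_Iset_sdiff_zero b (Iset (2 * (2 * a) + 1))
    (Iset (2 * a + 1))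
  have hinj := injOn_mul_add_Iset_sdiff_zero b (Iset (2 * a + 1))
  refine (eq_of_subset_of_card_le (union_subset ?_ ?_) (le_of_eq ?_)).symm
  · intro z hz
    obtain ⟨x, hx, rfl⟩ := mem_image.mp hz
    rw [mem_Iset_two_mul_add_one] at hx ⊢
    push_cast at hx ⊢
    rw [abs_mul, abs_of_pos (by positivity)]
    nlinarith [mul_le_mul_of_nonneg_left hx (by positivity : (0 : ℤ) ≤ b + 1)]
  · intro z hz
    obtain ⟨⟨x, y⟩, hxy, rfl⟩ := mem_image.mp hz
    obtain ⟨hx, hy⟩ := mem_product.mp hxy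
    rw [mem_Iset_two_mul_add_one] at hx ⊢
    have hy := (mem_Iset_sdiff_zero hy).2
    calc |2 * ((b : ℤ) + 1) * x + y| ≤ 2 * ((b : ℤ) + 1) * |x| + |y| := by
          rw [← abs_of_pos (by positivity : (0 : ℤ) < 2 * (b + 1)), ← abs_mul]
          exact abs_add_le _ _
      _ ≤ _ := by
          push_cast at hx ⊢
          nlinarith [mul_le_mul_of_nonneg_left hx (by positivity : (0 : ℤ) ≤ 2 * (b + 1))]
  · rw [card_union_of_disjoint hdisj,
      card_image_of_injective _ (mul_right_injective₀ (by positivity)),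
      card_image_of_injOn hinj, card_product, card_Iset_two_mul_add_one,
      card_Iset_two_mul_add_one, card_Iset_two_mul_add_one, card_Iset_two_mul_add_one_sdiff_zero]
    ring

lemma Iset_sdiff_zero_eq_union_image (a b : ℕ) :
    Iset ((2 * a + 1) * (2 * b + 1 + 1) - 1) \ {0} =
      (Iset (2 * (2 * a + 1) - 1) \ {0}).image (((b : ℤ) + 1) * ·) ∪
        (Iset (2 * a + 1) ×ˢ (Iset (2 * b + 1) \ {0})).image
          fun p => 2 * ((b : ℤ) + 1) * p.1 + p.2 := by
  have hc : ((b : ℤ) + 1) ≠ 0 := by positivity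
  have h0 : (0 : ℤ) ∉ (Iset (2 * a + 1) ×ˢ (Iset (2 * b + 1) \ {0})).image
      fun p => 2 * ((b : ℤ) + 1) * p.1 + p.2 :=
    disjoint_left.mp (disjoint_image_mul_image_mul_add_Iset_sdiff_zero b _ _)
      (mem_image_of_mem _ (zero_mem_Iset (m := 2 * (2 * a + 1) - 1) (by omega)))
  rw [Iset_eq_union_image, union_sdiff_distrib, image_sdiff _ _ (mul_right_injective₀ hc),
    image_singleton, mul_zero, sdiff_eq_self_of_disjoint (disjoint_singleton_right.mpr h0)]

theorem stmt5_general (m1 m2 : ℕ) (hm1 : Odd m1) (hm2 : Odd m2)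
    (h1 : PDMexists 3 m1) (h2 : PDMexists 3 (2 * m1 - 1)) (h3 : SIPDMexists 3 m2) :
    PDMexists 3 (m1 * (m2 + 1) - 1) ∧
    (SIPDMexists 3 (2 * m1 - 1) → SIPDMexists 3 (m1 * (m2 + 1) - 1)) := by
  obtain ⟨a, rfl⟩ := hm1
  obtain ⟨b, rfl⟩ := hm2
  obtain ⟨A, hA⟩ := h1
  obtain ⟨C, hC⟩ := h3
  have hc : ((b : ℤ) + 1) ≠ 0 := by positivity
  have hinj := injOn_mul_add_Iset_sdiff_zero b (Iset (2 * a + 1))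
  have hdisj := disjoint_image_mul_image_mul_add_Iset_sdiff_zero b
    (Iset (2 * (2 * a + 1) - 1)) (Iset (2 * a + 1))
  have hcols : (2 * a + 1) * (2 * b + 1 + 1) = 2 * (2 * a + 1) + (2 * a + 1) * (2 * b) := by ring
  constructor
  · obtain ⟨F, hF⟩ := h2
    rw [PDMexists, Iset_eq_union_image]
    refine (hF.sumElim_mul_add hA hC hc hinj hdisj).exists_fin ?_
    simp only [Fintype.card_sum, Fintype.card_prod, Fintype.card_fin, Nat.add_sub_cancel]
    omega
  · rintro ⟨F, hF⟩
    rw [SIPDMexists, Iset_sdiff_zero_eq_union_image]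
    refine (hF.sumElim_mul_add hA hC hc hinj
      (hdisj.mono_left (image_subset_image sdiff_subset))).exists_fin ?_
    simp only [Fintype.card_sum, Fintype.card_prod, Fintype.card_fin, Nat.add_sub_cancel]
    omega

/-- Theorem 2.6.  If there exist a `PDM(3,m1)`, a `PDM(3,2m1-1)`
and an `SIPDM(3,m2,1)`, then there exists a `PDM(3, m1(m2+1)-1)`; if moreover an
`SIPDM(3,2m1-1,1)` exists, then an `SIPDM(3, m1(m2+1)-1, 1)` exists. -/
theorem stmt5 (m1 m2 : ℕ) (hm1 : Odd m1) (hm1pos : 0 < m1)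
    (hm2 : Odd m2) (hm2pos : 0 < m2)
    (h1 : PDMexists 3 m1) (h2 : PDMexists 3 (2 * m1 - 1)) (h3 : SIPDMexists 3 m2) :
    PDMexists 3 (m1 * (m2 + 1) - 1) ∧
    (SIPDMexists 3 (2 * m1 - 1) → SIPDMexists 3 (m1 * (m2 + 1) - 1)) :=
  stmt5_general m1 m2 hm1 hm2 h1 h2 h3
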